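/- For each t ≥ 0, the map h̃_t = P ∘ ĥ_t (with ĥ_t as above, distinct weights dᵢ, restricted to the standard simplex Δ^{n-1}) is a bijection of the standard simplex onto itself, with inverse h̃_{-t}, and it fixes every vertex eᵢ of the simplex. -/
import Mathlib


/-- For each t, the map h̃_t = P ∘ ĥ_t is a bijection of the standard simplex onto itself,
with inverse h̃_{-t}, fixing every vertex. -/
theorem flow_bijects_simplex (n : ℕ) (d : Fin (n + 1) → ℝ) (hd : StrictMono d)
    (h : ℝ → (Fin (n + 1) → ℝ) → (Fin (n + 1) → ℝ))
    (hh : ∀ t y i, h t y i = (Real.exp (t * d i) * y i) / ∑ j, Real.exp (t * d j) * y j)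
    (t : ℝ) :
    Set.BijOn (h t) (stdSimplex ℝ (Fin (n + 1))) (stdSimplex ℝ (Fin (n + 1))) ∧
    (∀ x ∈ stdSimplex ℝ (Fin (n + 1)), h (-t) (h t x) = x) ∧
    (∀ i : Fin (n + 1), h t (Pi.single i 1) = Pi.single i 1) := by
  -- positivity of the normalization sum
  have key : ∀ (s : ℝ) (x : Fin (n + 1) → ℝ), x ∈ stdSimplex ℝ (Fin (n + 1)) →
      0 < ∑ j, Real.exp (s * d j) * x j := by
    intro s x hx
    obtain ⟨hx0, hx1⟩ := hx
    have hex : ∃ j, 0 < x j := by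
      by_contra hc
      push_neg at hc
      have hz : ∑ j, x j = 0 :=
        le_antisymm (Finset.sum_nonpos fun j _ => hc j)
          (Finset.sum_nonneg fun j _ => hx0 j)
      rw [hx1] at hz; norm_num at hz
    obtain ⟨j, hj⟩ := hex
    refine Finset.sum_pos' (fun k _ => mul_nonneg (Real.exp_pos _).le (hx0 k)) ?_
    exact ⟨j, Finset.mem_univ j, mul_pos (Real.exp_pos _) hj⟩
  -- mapsTo
  have maps : ∀ (s : ℝ) (x : Fin (n + 1) → ℝ), x ∈ stdSimplex ℝ (Fin (n + 1)) →
      h s x ∈ stdSimplex ℝ (Fin (n + 1)) := by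
    intro s x hx
    have hS := key s x hx
    obtain ⟨hx0, hx1⟩ := hx
    constructor
    · intro i
      rw [hh]
      exact div_nonneg (mul_nonneg (Real.exp_pos _).le (hx0 i)) hS.le
    · have : ∑ i, h s x i = (∑ i, Real.exp (s * d i) * x i) / (∑ j, Real.exp (s * d j) * x j) := by
        rw [Finset.sum_div]
        exact Finset.sum_congr rfl fun i _ => hh s x i
      rw [this, div_self hS.ne']
  -- inverse identity
  have inv : ∀ (s : ℝ) (x : Fin (n + 1) → ℝ), x ∈ stdSimplex ℝ (Fin (n + 1)) →
      h (-s) (h s x) = x := by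
    intro s x hx
    have hS := key s x hx
    set S := ∑ j, Real.exp (s * d j) * x j with hSdef
    have hterm : ∀ j, Real.exp (-s * d j) * h s x j = x j / S := by
      intro j
      rw [hh]
      rw [← hSdef, ← mul_div_assoc, ← mul_assoc, ← Real.exp_add]
      ring_nf
      rw [Real.exp_zero, one_mul]
    have hsum : ∑ j, Real.exp (-s * d j) * h s x j = 1 / S := by
      rw [Finset.sum_congr rfl fun j _ => hterm j, ← Finset.sum_div, hx.2]
    funext i
    rw [hh, hsum, hterm i]
    field_simp
  refine ⟨⟨fun x hx => maps t x hx, ?_, ?_⟩, fun x hx => inv t x hx, ?_⟩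
  · -- injOn
    intro a ha b hb hab
    have : h (-t) (h t a) = h (-t) (h t b) := by rw [hab]
    rwa [inv t a ha, inv t b hb] at this
  · -- surjOn
    intro y hy
    refine ⟨h (-t) y, maps (-t) y hy, ?_⟩
    have := inv (-t) y hy
    rwa [neg_neg] at this
  · -- vertices
    intro i
    have hmem : Pi.single i 1 ∈ stdSimplex ℝ (Fin (n + 1)) := by
      constructor
      · intro j
        by_cases hij : j = i
        · subst hij; simp
        · simp [Pi.single_eq_of_ne hij]
      · simp
    have hsum1 : ∑ j, Real.exp (t * d j) * (Pi.single i 1 : Fin (n + 1) → ℝ) j = Real.exp (t * d i) := by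
      rw [Finset.sum_eq_single i]
      · simp
      · intro b _ hb; simp [Pi.single_eq_of_ne hb]
      · intro hb; exact absurd (Finset.mem_univ i) hb
    funext j
    rw [hh, hsum1]
    by_cases hij : j = i
    · subst hij
      simp [div_self (Real.exp_pos _).ne']
    · simp [hh, Pi.single_eq_of_ne hij]
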